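/- arXiv:1707.08859 — 2 statements merged into one kernel-verified Lean document; each statement's English description precedes it below -/
import Mathlib

section
/- Let P, Q be real polynomials in two variables and f(x,y) = x² + y² − 1/2. If there exists a polynomial k with P·(∂f/∂x) + Q·(∂f/∂y) = k·f, then there exist polynomials A, B, C such that P = A·f − 2C·y and Q = B·f + 2C·x. -/
open MvPolynomial

/-
The gradient (2x, 2y) of f = x² + y² − 1/2 satisfies x·2x + y·2y = 1 + 2f, so f and its partial
derivatives generate the unit ideal. Multiplying P and Q by this relation and substituting the
invariance relation P f_x + Q f_y = k f splits (P, Q) into a multiple of f plus a multiple of the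
rotated gradient (−f_y, f_x).
-/

theorem exists_eq_mul_sub_mul_of_mul_add_mul_eq {R : Type*} [CommRing R]
    {a b f u v c P Q k : R} (hunit : u * a + v * b = 1 + c * f)
    (hinv : P * a + Q * b = k * f) :
    ∃ A B C : R, P = A * f - C * b ∧ Q = B * f + C * a :=
  ⟨u * k - c * P, v * k - c * Q, Q * u - P * v,
    by linear_combination u * hinv - P * hunit,
    by linear_combination v * hinv - Q * hunit⟩

section Circle

variable {R : Type*} [CommRing R] (r : R)

theorem pderiv_zero_circle :
    pderiv 0 (X 0 ^ 2 + X 1 ^ 2 - C r : MvPolynomial (Fin 2) R) = 2 * X 0 := by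
  simp [pderiv_X, mul_comm]

theorem pderiv_one_circle :
    pderiv 1 (X 0 ^ 2 + X 1 ^ 2 - C r : MvPolynomial (Fin 2) R) = 2 * X 1 := by
  simp [pderiv_X, mul_comm]

end Circle

/-- If the circle x² + y² − 1/2 = 0 is invariant for the planar polynomial
vector field (P, Q), then P = A·f − 2C·y and Q = B·f + 2C·x for some
polynomials A, B, C. -/
theorem circle_invariant_structure
    (P Q : MvPolynomial (Fin 2) ℝ)
    (f : MvPolynomial (Fin 2) ℝ)
    (hf : f = X 0 ^ 2 + X 1 ^ 2 - C (1 / 2 : ℝ))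
    (h : ∃ k : MvPolynomial (Fin 2) ℝ,
      P * pderiv 0 f + Q * pderiv 1 f = k * f) :
    ∃ A B C' : MvPolynomial (Fin 2) ℝ,
      P = A * f - 2 * C' * X 1 ∧ Q = B * f + 2 * C' * X 0 := by
  obtain ⟨k, hk⟩ := h
  rw [hf, pderiv_zero_circle, pderiv_one_circle, ← hf] at hk
  have hunit : X 0 * (2 * X 0) + X 1 * (2 * X 1) = 1 + 2 * f := by
    have hhalf : (2 : MvPolynomial (Fin 2) ℝ) * C (1 / 2) = 1 := by
      rw [← map_ofNat C, ← map_mul]; norm_num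
    linear_combination -2 * hf + hhalf
  obtain ⟨A, B, C', hP, hQ⟩ := exists_eq_mul_sub_mul_of_mul_add_mul_eq hunit hk
  exact ⟨A, B, C', by rw [hP]; ring, by rw [hQ]; ring⟩
end

section
/- Let P₁, P₂, P₃, P₄ be real polynomials in variables x₁, x₂, x₃, x₄, let f = x₁² + x₂² − 1/2 and g = x₃² + x₄² − 1/2. If there exist polynomials K₁, K₂ such that P₁·(2x₁) + P₂·(2x₂) + P₃·0 + P₄·0 = K₁·f (i.e., the derivative of f along the vector field (P₁,P₂,P₃,P₄) equals K₁·f) and the derivative of g along the vector field equals K₂·g, then there exist polynomials A, B, C, D, E, F in x₁,…,x₄ such that P₁ = A·f − 2C·x₂, P₂ = B·f + 2C·x₁, P₃ = D·g − 2F·x₄, P₄ = E·g + 2F·x₃. -/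
open MvPolynomial

/- If `p ⬝ 2x + q ⬝ 2y = k f` with `f = x² + y² - c`, then `x k - 2p`, `y k - 2q` and `x q - y p`
are, up to the unit `2c`, the coefficients of `p` and `q` against `f` and the rotation field
`(-2y, 2x)`: substituting `k f` back in leaves exactly `2c ⬝ p` and `2c ⬝ q`. -/
theorem exists_decomposition_of_circle_invariant {R : Type*} [CommRing R] {x y c p q k : R}
    (hc : IsUnit (2 * c)) (h : p * (2 * x) + q * (2 * y) = k * (x ^ 2 + y ^ 2 - c)) :
    ∃ a b d : R, p = a * (x ^ 2 + y ^ 2 - c) - 2 * d * y ∧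
      q = b * (x ^ 2 + y ^ 2 - c) + 2 * d * x := by
  obtain ⟨u, hu⟩ := hc.exists_left_inv
  refine ⟨u * (x * k - 2 * p), u * (y * k - 2 * q), u * (x * q - y * p), ?_, ?_⟩
  · linear_combination u * x * h - p * hu
  · linear_combination u * y * h - q * hu

theorem MvPolynomial.sum_mul_pderiv_sq_add_sq_sub_C {σ R : Type*} [Fintype σ] [DecidableEq σ]
    [CommRing R] (P : σ → MvPolynomial σ R) (i j : σ) (c : R) :
    ∑ k, P k * pderiv k (X i ^ 2 + X j ^ 2 - C c) = P i * (2 * X i) + P j * (2 * X j) := by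
  simp only [map_sub, map_add, pderiv_C, sub_zero, Derivation.leibniz_pow, pderiv_X,
    Pi.single_apply, smul_ite, smul_zero, mul_add, mul_ite, mul_zero, Finset.sum_add_distrib,
    Finset.sum_ite_eq, Finset.mem_univ, if_true]
  ring

/-- Theorem 1 of the paper: if the polynomial vector field (P₁,P₂,P₃,P₄) on ℝ⁴
has both hypersurfaces f = x₁²+x₂²−1/2 = 0 and g = x₃²+x₄²−1/2 = 0 invariant
(so the Clifford torus is invariant), then the Pᵢ have the stated form. -/
theorem clifford_torus_invariant_structure
    (P : Fin 4 → MvPolynomial (Fin 4) ℝ)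
    (f g : MvPolynomial (Fin 4) ℝ)
    (hf : f = X 0 ^ 2 + X 1 ^ 2 - C (1 / 2 : ℝ))
    (hg : g = X 2 ^ 2 + X 3 ^ 2 - C (1 / 2 : ℝ))
    (h1 : ∃ K₁ : MvPolynomial (Fin 4) ℝ, ∑ i, P i * pderiv i f = K₁ * f)
    (h2 : ∃ K₂ : MvPolynomial (Fin 4) ℝ, ∑ i, P i * pderiv i g = K₂ * g) :
    ∃ A B C' D E F : MvPolynomial (Fin 4) ℝ,
      P 0 = A * f - 2 * C' * X 1 ∧
      P 1 = B * f + 2 * C' * X 0 ∧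
      P 2 = D * g - 2 * F * X 3 ∧
      P 3 = E * g + 2 * F * X 2 := by
  obtain ⟨K₁, h1⟩ := h1
  obtain ⟨K₂, h2⟩ := h2
  subst hf hg
  have hunit : IsUnit (2 * C (1 / 2 : ℝ) : MvPolynomial (Fin 4) ℝ) := by
    rw [show (2 : MvPolynomial (Fin 4) ℝ) = C 2 from (map_ofNat C 2).symm, ← map_mul]
    norm_num
  rw [sum_mul_pderiv_sq_add_sq_sub_C] at h1 h2
  obtain ⟨A, B, C', hA, hB⟩ := exists_decomposition_of_circle_invariant hunit h1
  obtain ⟨D, E, F, hD, hE⟩ := exists_decomposition_of_circle_invariant hunit h2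
  exact ⟨A, B, C', D, E, F, hA, hB, hD, hE⟩
end
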